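/- Let G be a group with finite symmetric generating set S, and suppose the predicate P(u, x) := 'ℓ(ux) > ℓ(u)' is decidable for geodesic words u and generators x, and that G is recursively presented. Then the word problem for G is decidable. -/

import Mathlib

/-!
A word is geodesic exactly when each of its letters, appended to the preceding prefix, increases
the word length; so the oracle `p` decides geodesicity letter by letter. Given a word `u`, search
through the pairs `(n, w)` for one with `e n = u w⁻¹` and `w` geodesic: one exists, since `u`
has a geodesic representative and `u w⁻¹` is then trivial. The `w` found is a geodesic word
equal to `u`, and a geodesic word is trivial iff it is empty.
-/

/-- Word length of `g` with respect to a generating set `S`. -/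
noncomputable def wordLength {G : Type*} [Group G] (S : Set G) (g : G) : ℕ :=
  sInf {n | ∃ l : List G, (∀ x ∈ l, x ∈ S) ∧ l.length = n ∧ l.prod = g}

section Geodesic

variable {G α : Type*} [Group G] (ι : α → G)

def IsGeodesic (u : List α) : Prop :=
  wordLength (Set.range ι) (u.map ι).prod = u.length

theorem wordLength_prod_map_le (u : List α) :
    wordLength (Set.range ι) (u.map ι).prod ≤ u.length :=
  Nat.sInf_le ⟨u.map ι, List.forall_mem_map.2 fun a _ => Set.mem_range_self a,
    List.length_map _, rfl⟩

theorem exists_isGeodesic_prod_map_eq (u : List α) :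
    ∃ w, IsGeodesic ι w ∧ (w.map ι).prod = (u.map ι).prod := by
  obtain ⟨l, hl, hlen, hprod⟩ := Nat.sInf_mem (s := {n | ∃ l : List G,
    (∀ x ∈ l, x ∈ Set.range ι) ∧ l.length = n ∧ l.prod = (u.map ι).prod})
    ⟨_, u.map ι, List.forall_mem_map.2 fun a _ => Set.mem_range_self a, rfl, rfl⟩
  obtain ⟨w, rfl⟩ : l ∈ Set.range (List.map ι) := by rwa [Set.range_list_map]
  exact ⟨w, by rw [IsGeodesic, hprod, ← List.length_map ι, hlen]; rfl, hprod⟩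

theorem wordLength_prod_map_append_le (u v : List α) :
    wordLength (Set.range ι) ((u ++ v).map ι).prod ≤
      wordLength (Set.range ι) (u.map ι).prod + v.length := by
  obtain ⟨w, hw, hwu⟩ := exists_isGeodesic_prod_map_eq ι u
  calc wordLength (Set.range ι) ((u ++ v).map ι).prod
      = wordLength (Set.range ι) ((w ++ v).map ι).prod := by simp [hwu]
    _ ≤ (w ++ v).length := wordLength_prod_map_le ι _
    _ = _ := by rw [List.length_append, ← hw, hwu]

variable {ι}

theorem IsGeodesic.of_append_left {u v : List α} (h : IsGeodesic ι (u ++ v)) :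
    IsGeodesic ι u := by
  have := wordLength_prod_map_append_le ι u v
  have := wordLength_prod_map_le ι u
  rw [IsGeodesic, List.length_append] at h
  exact le_antisymm ‹_› (by omega)

theorem isGeodesic_append_singleton_iff {u : List α} {x : α} :
    IsGeodesic ι (u ++ [x]) ↔ IsGeodesic ι u ∧
      wordLength (Set.range ι) (u.map ι).prod <
        wordLength (Set.range ι) ((u.map ι).prod * ι x) := by
  have hle := wordLength_prod_map_le ι u
  have happ := wordLength_prod_map_append_le ι u [x]
  simp only [IsGeodesic, List.map_append, List.map_singleton, List.prod_append,
    List.prod_singleton, List.length_append, List.length_singleton] at happ ⊢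
  omega

theorem IsGeodesic.eq_nil_iff {u : List α} (hu : IsGeodesic ι u) :
    u = [] ↔ (u.map ι).prod = 1 := by
  refine ⟨fun h => by simp [h], fun h => List.length_eq_zero_iff.1 ?_⟩
  rw [← hu, h]
  exact Nat.le_zero.1 (wordLength_prod_map_le ι [])

def DecidesLengthIncrease (ι : α → G) (p : List α × α → Bool) : Prop :=
  ∀ u x, IsGeodesic ι u → (p (u, x) = true ↔
    wordLength (Set.range ι) (u.map ι).prod < wordLength (Set.range ι) ((u.map ι).prod * ι x))

end Geodesic

theorem List.prod_map_reverse_map_of_inv {G α : Type*} [Group G] {ι : α → G} {inv : α → α}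
    (hinv : ∀ a, ι (inv a) = (ι a)⁻¹) (w : List α) :
    ((w.map inv).reverse.map ι).prod = (w.map ι).prod⁻¹ := by
  simp [List.prod_inv_reverse, Function.comp_def, hinv]

section GeodesicSearch

variable {G α : Type*} [Group G] {ι : α → G} (p : List α × α → Bool)

def prefixCheck (w : List α) : ℕ → Bool
  | 0 => true
  | n + 1 => prefixCheck w n && (w[n]?.elim true fun x => p (w.take n, x))

variable {p}

theorem prefixCheck_iff (hp : DecidesLengthIncrease ι p)
    {w : List α} {n : ℕ} (hn : n ≤ w.length) :
    prefixCheck p w n = true ↔ IsGeodesic ι (w.take n) := by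
  induction n with
  | zero => simpa [prefixCheck, IsGeodesic] using Nat.le_zero.1 (wordLength_prod_map_le ι [])
  | succ n ih =>
    have hlt : n < w.length := hn
    rw [prefixCheck, List.getElem?_eq_getElem hlt, List.take_add_one,
      List.getElem?_eq_getElem hlt, Option.toList_some, isGeodesic_append_singleton_iff,
      Bool.and_eq_true, ih hlt.le]
    exact and_congr_right (hp _ _)

theorem computable_prefixCheck [Primcodable α] (hpc : Computable p) :
    Computable fun w : List α => prefixCheck p w w.length := by
  have hstep : Computable₂ fun (w : List α) (nb : ℕ × Bool) =>
      nb.2 && (w[nb.1]?.elim true fun x => p (w.take nb.1, x)) := by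
    refine Primrec.and.to_comp.comp (Computable.snd.comp Computable.snd) ?_
    exact (Computable.option_casesOn (Computable.list_getElem?.comp Computable.fst
      (Computable.fst.comp Computable.snd)) (Computable.const true)
      (hpc.comp ((Primrec.list_take.to_comp.comp (Computable.fst.comp (Computable.snd.comp
        Computable.fst)) (Computable.fst.comp Computable.fst)).pair Computable.snd)).to₂).of_eq
      fun a => by cases a.1[a.2.1]? <;> rfl
  refine (Computable.nat_rec Computable.list_length (Computable.const true) hstep).of_eq
    fun w => ?_
  generalize w.length = n
  induction n with
  | zero => rfl
  | succ n ih => simp only [prefixCheck, ← ih]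

variable [Primcodable α] [DecidableEq α] (p) (e : ℕ → List α) (inv : α → α)

def geodesicSearch (u : List α) (m : ℕ) : Option (List α) :=
  (Encodable.decode (α := ℕ × List α) m).bind fun nw =>
    bif decide (e nw.1 = u ++ (nw.2.map inv).reverse) && prefixCheck p nw.2 nw.2.length
    then some nw.2 else none

variable {p e inv}

theorem computable₂_geodesicSearch (hpc : Computable p) (hec : Computable e)
    (hinvc : Primrec inv) : Computable₂ (geodesicSearch p e inv) := by
  have hword : Computable fun z : (List α × ℕ) × (ℕ × List α) => z.2.2 :=
    Computable.snd.comp Computable.snd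
  have htest : Computable fun z : (List α × ℕ) × (ℕ × List α) =>
      decide (e z.2.1 = z.1.1 ++ (z.2.2.map inv).reverse) &&
        prefixCheck p z.2.2 z.2.2.length :=
    Primrec.and.to_comp.comp
      (Primrec.eq.decide.to_comp.comp (hec.comp (Computable.fst.comp Computable.snd))
        (Computable.list_append.comp (Computable.fst.comp Computable.fst)
          (Computable.list_reverse.comp ((Primrec.list_map Primrec.id
            (hinvc.comp Primrec.snd).to₂).to_comp.comp hword))))
      ((computable_prefixCheck hpc).comp hword)
  exact Computable.option_bind (Computable.decode.comp Computable.snd)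
    (Computable.cond htest (Computable.option_some.comp hword) (Computable.const none)).to₂

variable (hp : DecidesLengthIncrease ι p)
  (he : ∀ u : List α, (u.map ι).prod = 1 ↔ ∃ n, e n = u)
  (hinv : ∀ a, ι (inv a) = (ι a)⁻¹)
include hp he hinv

theorem geodesicSearch_spec {u w : List α} {m : ℕ} (h : w ∈ geodesicSearch p e inv u m) :
    IsGeodesic ι w ∧ (w.map ι).prod = (u.map ι).prod := by
  simp only [geodesicSearch, Option.mem_def, Option.bind_eq_some_iff] at h
  obtain ⟨⟨n, w'⟩, -, h⟩ := h
  simp only [cond_eq_ite, Bool.and_eq_true, decide_eq_true_eq] at h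
  split_ifs at h with htest
  obtain rfl := Option.some_injective _ h
  obtain ⟨hn, hcheck⟩ := htest
  have hone := (he _).2 ⟨n, hn⟩
  rw [List.map_append, List.prod_append, List.prod_map_reverse_map_of_inv hinv,
    mul_inv_eq_one] at hone
  exact ⟨by simpa using (prefixCheck_iff hp le_rfl).1 hcheck, hone.symm⟩

theorem exists_mem_geodesicSearch (u : List α) : ∃ m w, w ∈ geodesicSearch p e inv u m := by
  obtain ⟨w, hw, hwu⟩ := exists_isGeodesic_prod_map_eq ι u
  obtain ⟨n, hn⟩ := (he (u ++ (w.map inv).reverse)).1 (by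
    rw [List.map_append, List.prod_append, List.prod_map_reverse_map_of_inv hinv, hwu,
      mul_inv_cancel])
  refine ⟨Encodable.encode (n, w), w, ?_⟩
  have hcheck := (prefixCheck_iff hp le_rfl).2 (by rwa [List.take_length])
  simp [geodesicSearch, hn, hcheck]

theorem exists_computable_isGeodesic_prod_map_eq (hpc : Computable p) (hec : Computable e)
    (hinvc : Primrec inv) :
    ∃ f : List α → List α, Computable f ∧
      ∀ u, IsGeodesic ι (f u) ∧ ((f u).map ι).prod = (u.map ι).prod := by
  have hdom u : (Nat.rfindOpt (geodesicSearch p e inv u)).Dom :=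
    Nat.rfindOpt_dom.2 (exists_mem_geodesicSearch hp he hinv u)
  refine ⟨fun u => (Nat.rfindOpt (geodesicSearch p e inv u)).get (hdom u),
    (Partrec.rfindOpt (computable₂_geodesicSearch hpc hec hinvc)).of_eq_tot
      fun u => Part.get_mem (hdom u), fun u => ?_⟩
  obtain ⟨m, hm⟩ := Nat.rfindOpt_spec (Part.get_mem (hdom u))
  exact geodesicSearch_spec hp he hinv hm

end GeodesicSearch

theorem stmt_12_general {G : Type*} [Group G] {k : ℕ} (ι : Fin k → G)
    (hsym : ∀ x ∈ Set.range ι, x⁻¹ ∈ Set.range ι)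
    -- recursively presented: the words representing the identity are r.e.
    (e : ℕ → List (Fin k)) (he : Computable e)
    (he_spec : ∀ u : List (Fin k), (u.map ι).prod = 1 ↔ ∃ n, e n = u)
    -- an algorithm deciding, for geodesic u and generator x, whether ℓ(ux) > ℓ(u)
    (p : List (Fin k) × Fin k → Bool) (hp : Computable p)
    (hp_spec : ∀ (u : List (Fin k)) (x : Fin k),
        wordLength (Set.range ι) (u.map ι).prod = u.length →
        (p (u, x) = true ↔
          wordLength (Set.range ι) ((u.map ι).prod * ι x) >
            wordLength (Set.range ι) (u.map ι).prod)) :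
    ∃ wp : List (Fin k) → Bool, Computable wp ∧
      ∀ u : List (Fin k), wp u = true ↔ (u.map ι).prod = 1 := by
  choose inv hinv using fun i => hsym (ι i) ⟨i, rfl⟩
  obtain ⟨f, hf, hfu⟩ := exists_computable_isGeodesic_prod_map_eq hp_spec he_spec
    hinv hp he (Primrec.dom_finite inv)
  refine ⟨fun u => decide (f u = []), Primrec.eq.decide.to_comp.comp hf (Computable.const []),
    fun u => ?_⟩
  rw [decide_eq_true_eq, (hfu u).1.eq_nil_iff, (hfu u).2]

theorem stmt_12 {G : Type*} [Group G] {k : ℕ} (ι : Fin k → G)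
    (hsym : ∀ x ∈ Set.range ι, x⁻¹ ∈ Set.range ι)
    (hgen : Subgroup.closure (Set.range ι) = ⊤)
    -- recursively presented: the words representing the identity are r.e.
    (e : ℕ → List (Fin k)) (he : Computable e)
    (he_spec : ∀ u : List (Fin k), (u.map ι).prod = 1 ↔ ∃ n, e n = u)
    -- an algorithm deciding, for geodesic u and generator x, whether ℓ(ux) > ℓ(u)
    (p : List (Fin k) × Fin k → Bool) (hp : Computable p)
    (hp_spec : ∀ (u : List (Fin k)) (x : Fin k),
        wordLength (Set.range ι) (u.map ι).prod = u.length →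
        (p (u, x) = true ↔
          wordLength (Set.range ι) ((u.map ι).prod * ι x) >
            wordLength (Set.range ι) (u.map ι).prod)) :
    ∃ wp : List (Fin k) → Bool, Computable wp ∧
      ∀ u : List (Fin k), wp u = true ↔ (u.map ι).prod = 1 :=
  stmt_12_general ι hsym e he he_spec p hp hp_spec
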